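/- Let a > 0 and for x > 0 define Q_a^{[1]}(x) := e^{−ax/(a+1)}, Q_a^{[2]}(x) := e^{−x} + (x/(a+1)) e^{−(a+1)x/(a+2)}, Q_a^{[3]}(x) := 1/(a+1)² + (a(a+2)/(a+1)²) e^{−(a+1)x/(a+2)}, Q_a^{[4]}(x) := (a e^{−x} + 1)/(a+1) − (a x²/(2(a+1)(a+2))) e^{−2(a+2)x/(3(a+3))}, Q_a^{[5]}(x) := (a e^{−x} + 1)/(a+1) − a x² (a + 5 + 2(a+2) e^{−x})/(6(a+1)(a+2)(a+3)). Then for all x > 0: (a Γ(a)/x^a) G_a(x) ≥ max{Q_a^{[1]}(x), Q_a^{[2]}(x), Q_a^{[5]}(x)}, (a Γ(a)/x^a) G_a(x) ≤ min{Q_a^{[3]}(x), Q_a^{[4]}(x)}, and, if additionally x < a+1, (a Γ(a)/x^a) G_a(x) ≤ (a+1) e^{−x}/(a+1−x). -/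

import Mathlib

open MeasureTheory

/-- Distribution function of the gamma distribution with shape `a` and scale 1:
`G_a(x) = Γ(a)⁻¹ ∫₀ˣ t^{a-1} e^{-t} dt`. -/
noncomputable def gammaCDF (a x : ℝ) : ℝ :=
  (Real.Gamma a)⁻¹ * ∫ t in (0:ℝ)..x, t ^ (a - 1) * Real.exp (-t)

/-!
Substituting `t = x s` turns `a Γ(a) x^{-a} G_a(x)` into `a J_a(x)`, where
`J_b(x) = powExpIntegral b x = ∫₀¹ s^{b-1} e^{-xs} ds`, so that `b J_b` is the Laplace transform
of the Beta(b, 1) law. Every bound compares `e^{-xs}` on `[0, 1]` with a polynomial in `s` of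
degree at most two and integrates against a nonnegative weight with explicit moments: tangent
lines (Jensen) give lower bounds, chords and a tangent quadratic give upper bounds. Integration by
parts, `b J_b = e^{-x} + x J_{b+1}`, shifts the shape: it yields `Q⁽²⁾` from Jensen at shape
`a + 1`, the bound for `x < a + 1` from `J_{a+2} ≤ J_{a+1}`, and writes `a J_a` through
`J_2 - J_{a+2} = ∫₀¹ (s - s^{a+1}) e^{-xs} ds`, whose tangent and chord bounds give `Q⁽⁴⁾`
and `Q⁽⁵⁾`.
-/

open Real Set intervalIntegral

section WeightedIntegral

variable {w : ℝ → ℝ}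

lemma integral_mul_quadratic (hw : IntervalIntegrable w volume 0 1) (A B C : ℝ) :
    ∫ s in (0:ℝ)..1, w s * (A + B * s + C * s ^ 2) =
      A * (∫ s in (0:ℝ)..1, w s) + B * (∫ s in (0:ℝ)..1, w s * s)
        + C * ∫ s in (0:ℝ)..1, w s * s ^ 2 := by
  have hw₁ : IntervalIntegrable (fun s => w s * s) volume 0 1 :=
    hw.mul_continuousOn continuousOn_id
  have hw₂ : IntervalIntegrable (fun s => w s * s ^ 2) volume 0 1 :=
    hw.mul_continuousOn (continuousOn_pow 2)
  rw [← intervalIntegral.integral_const_mul, ← intervalIntegral.integral_const_mul,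
    ← intervalIntegral.integral_const_mul,
    ← intervalIntegral.integral_add (hw.const_mul A) (hw₁.const_mul B),
    ← intervalIntegral.integral_add ((hw.const_mul A).add (hw₁.const_mul B)) (hw₂.const_mul C)]
  congr 1
  ext s
  ring

lemma integral_mul_affine (hw : IntervalIntegrable w volume 0 1) (A B : ℝ) :
    ∫ s in (0:ℝ)..1, w s * (A + B * s) =
      A * (∫ s in (0:ℝ)..1, w s) + B * ∫ s in (0:ℝ)..1, w s * s := by
  simpa using integral_mul_quadratic hw A B 0

lemma integral_mul_mono (hw₀ : ∀ s ∈ Ioo (0:ℝ) 1, 0 ≤ w s)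
    (hw : IntervalIntegrable w volume 0 1) {f g : ℝ → ℝ} (hf : Continuous f) (hg : Continuous g)
    (hfg : ∀ s ∈ Ioo (0:ℝ) 1, f s ≤ g s) :
    ∫ s in (0:ℝ)..1, w s * f s ≤ ∫ s in (0:ℝ)..1, w s * g s :=
  integral_mono_on_of_le_Ioo zero_le_one (hw.mul_continuousOn hf.continuousOn)
    (hw.mul_continuousOn hg.continuousOn) fun s hs =>
      mul_le_mul_of_nonneg_left (hfg s hs) (hw₀ s hs)

lemma mul_exp_le_integral_mul_exp (hw₀ : ∀ s ∈ Ioo (0:ℝ) 1, 0 ≤ w s)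
    (hw : IntervalIntegrable w volume 0 1) {m : ℝ}
    (hm : ∫ s in (0:ℝ)..1, w s * s = m * ∫ s in (0:ℝ)..1, w s) (x : ℝ) :
    (∫ s in (0:ℝ)..1, w s) * exp (-(x * m)) ≤ ∫ s in (0:ℝ)..1, w s * exp (-(x * s)) := by
  have tangent (s : ℝ) :
      exp (-(x * m)) * (1 + x * m) + -(x * exp (-(x * m))) * s ≤ exp (-(x * s)) := by
    have h := mul_le_mul_of_nonneg_left (add_one_le_exp (x * m - x * s)) (exp_pos (-(x * m))).le
    rw [← exp_add, show -(x * m) + (x * m - x * s) = -(x * s) by ring] at h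
    linarith
  calc (∫ s in (0:ℝ)..1, w s) * exp (-(x * m))
      = ∫ s in (0:ℝ)..1, w s * (exp (-(x * m)) * (1 + x * m) + -(x * exp (-(x * m))) * s) := by
        rw [integral_mul_affine hw, hm]
        ring
    _ ≤ _ := integral_mul_mono hw₀ hw (by fun_prop) (by fun_prop) fun s _ => tangent s

lemma integral_mul_exp_le_chord (hw₀ : ∀ s ∈ Ioo (0:ℝ) 1, 0 ≤ w s)
    (hw : IntervalIntegrable w volume 0 1) (x : ℝ) :
    ∫ s in (0:ℝ)..1, w s * exp (-(x * s))
      ≤ (∫ s in (0:ℝ)..1, w s) + (exp (-x) - 1) * ∫ s in (0:ℝ)..1, w s * s := by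
  have chord (s : ℝ) (hs : s ∈ Ioo (0:ℝ) 1) :
      exp (-(x * s)) ≤ 1 + (exp (-x) - 1) * s := by
    have h := convexOn_exp.2 (mem_univ 0) (mem_univ (-x)) (sub_nonneg.2 hs.2.le) hs.1.le
      (sub_add_cancel 1 s)
    simp only [smul_eq_mul, mul_zero, zero_add, exp_zero] at h
    rw [show s * -x = -(x * s) by ring] at h
    linarith
  calc ∫ s in (0:ℝ)..1, w s * exp (-(x * s))
      ≤ ∫ s in (0:ℝ)..1, w s * (1 + (exp (-x) - 1) * s) :=
        integral_mul_mono hw₀ hw (by fun_prop) (by fun_prop) chord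
    _ = _ := by rw [integral_mul_affine hw, one_mul]

end WeightedIntegral

lemma integral_one_sub_mul_exp {t : ℝ} (ht : t ≠ 0) :
    ∫ r in (0:ℝ)..1, (1 - r) * exp (t * r) = (exp t - 1 - t) / t ^ 2 := by
  have hderiv (r : ℝ) : HasDerivAt (fun r => exp (t * r) * ((1 - r) / t + 1 / t ^ 2))
      ((1 - r) * exp (t * r)) r := by
    refine ((((hasDerivAt_id r).const_mul t).exp).fun_mul
      ((((hasDerivAt_const r 1).sub (hasDerivAt_id r)).div_const t).add_const _)).congr_deriv ?_
    simp only [id, Pi.sub_apply]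
    field_simp
    ring
  rw [integral_eq_sub_of_hasDerivAt (fun r _ => hderiv r)
    (Continuous.intervalIntegrable (by fun_prop) _ _)]
  simp only [mul_one, mul_zero, exp_zero, sub_self, zero_div, zero_add]
  field_simp
  ring

lemma exp_sub_one_sub_le {d t : ℝ} (hd : 0 < d) (htd : t ≤ d) :
    exp t - 1 - t ≤ t ^ 2 * ((exp d - 1 - d) / d ^ 2) := by
  rcases eq_or_ne t 0 with rfl | ht
  · simp
  rw [← integral_one_sub_mul_exp hd.ne', ← div_le_iff₀' (by positivity),
    ← integral_one_sub_mul_exp ht]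
  exact integral_mono_on zero_le_one (Continuous.intervalIntegrable (by fun_prop) _ _)
    (Continuous.intervalIntegrable (by fun_prop) _ _) fun r hr =>
      mul_le_mul_of_nonneg_left (exp_le_exp.2 (mul_le_mul_of_nonneg_right htd hr.1))
        (sub_nonneg.2 hr.2)

lemma intervalIntegrable_rpow_sub_one_mul {b : ℝ} (hb : 0 < b) {g : ℝ → ℝ}
    (hg : Continuous g) : IntervalIntegrable (fun s => s ^ (b - 1) * g s) volume 0 1 :=
  (intervalIntegrable_rpow' (by linarith)).mul_continuousOn hg.continuousOn

lemma integral_rpow_sub_one_mul_pow {b : ℝ} (hb : 0 < b) (n : ℕ) :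
    ∫ s in (0:ℝ)..1, s ^ (b - 1) * s ^ n = 1 / (b + n) := by
  have hbn : 0 < b + n := by positivity
  rw [integral_congr_ae (ae_of_all _ fun s hs =>
      (rpow_add_natCast (uIoc_of_le (zero_le_one' ℝ) ▸ hs).1.ne' _ n).symm),
    integral_rpow (Or.inl (by linarith)), one_rpow, zero_rpow (by linarith)]
  ring_nf

lemma integral_rpow_sub_rpow_mul_pow {b c : ℝ} (hb : 0 < b) (hc : 0 < c) (n : ℕ) :
    ∫ s in (0:ℝ)..1, (s ^ (b - 1) - s ^ (c - 1)) * s ^ n = 1 / (b + n) - 1 / (c + n) := by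
  simp_rw [sub_mul]
  rw [intervalIntegral.integral_sub (intervalIntegrable_rpow_sub_one_mul hb (continuous_pow n))
      (intervalIntegrable_rpow_sub_one_mul hc (continuous_pow n)),
    integral_rpow_sub_one_mul_pow hb, integral_rpow_sub_one_mul_pow hc]

lemma rpow_sub_rpow_nonneg {b c s : ℝ} (hbc : b ≤ c) (hs : s ∈ Ioo (0:ℝ) 1) :
    0 ≤ s ^ (b - 1) - s ^ (c - 1) :=
  sub_nonneg.2 (rpow_le_rpow_of_exponent_ge hs.1 hs.2.le (by linarith))

lemma intervalIntegrable_rpow_sub_rpow {b c : ℝ} (hb : 0 < b) (hc : 0 < c) :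
    IntervalIntegrable (fun s : ℝ => s ^ (b - 1) - s ^ (c - 1)) volume 0 1 :=
  (intervalIntegrable_rpow' (by linarith)).sub (intervalIntegrable_rpow' (by linarith))

noncomputable def powExpIntegral (b x : ℝ) : ℝ :=
  ∫ s in (0:ℝ)..1, s ^ (b - 1) * exp (-(x * s))

lemma rpow_mul_powExpIntegral (b : ℝ) {x : ℝ} (hx : 0 < x) :
    x ^ b * powExpIntegral b x = ∫ t in (0:ℝ)..x, t ^ (b - 1) * exp (-t) := by
  have hsubst := mul_integral_comp_mul_left (a := 0) (b := 1) (c := x)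
    (f := fun t => t ^ (b - 1) * exp (-t))
  rw [mul_zero, mul_one] at hsubst
  rw [← hsubst, integral_congr fun s hs => by
      rw [mul_rpow hx.le (uIcc_of_le (zero_le_one' ℝ) ▸ hs).1, mul_assoc],
    intervalIntegral.integral_const_mul, powExpIntegral, ← mul_assoc, rpow_sub_one hx.ne',
    mul_div_cancel₀ _ hx.ne']

lemma mul_Gamma_div_rpow_mul_gammaCDF {a x : ℝ} (ha : 0 < a) (hx : 0 < x) :
    a * Gamma a / x ^ a * gammaCDF a x = a * powExpIntegral a x := by
  rw [gammaCDF, ← rpow_mul_powExpIntegral a hx]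
  have := (Gamma_pos_of_pos ha).ne'
  have := (rpow_pos_of_pos hx a).ne'
  field_simp

lemma hasDerivAt_exp_neg_mul (x s : ℝ) :
    HasDerivAt (fun s => exp (-(x * s))) (-(x * exp (-(x * s)))) s := by
  simpa [mul_comm] using ((hasDerivAt_id s).const_mul x).fun_neg.exp

lemma mul_powExpIntegral {b : ℝ} (hb : 0 < b) (x : ℝ) :
    b * powExpIntegral b x = exp (-x) + x * powExpIntegral (b + 1) x := by
  have hderiv (s : ℝ) (hs : s ∈ Ioo (0:ℝ) 1) :
      HasDerivWithinAt (fun s => s ^ b * exp (-(x * s)))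
        (b * (s ^ (b - 1) * exp (-(x * s))) - x * (s ^ (b + 1 - 1) * exp (-(x * s))))
        (Ioi s) s := by
    refine (((hasDerivAt_rpow_const (Or.inl hs.1.ne')).fun_mul
      (hasDerivAt_exp_neg_mul x s)).congr_deriv ?_).hasDerivWithinAt
    rw [add_sub_cancel_right]
    ring
  have hcont : Continuous fun s => exp (-(x * s)) := by fun_prop
  have hint₀ := (intervalIntegrable_rpow_sub_one_mul hb hcont).const_mul b
  have hint₁ :=
    (intervalIntegrable_rpow_sub_one_mul (b := b + 1) (by linarith) hcont).const_mul x
  have hFTC := integral_eq_sub_of_hasDeriv_right_of_le zero_le_one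
    ((continuous_rpow_const hb.le).mul (by fun_prop)).continuousOn hderiv (hint₀.sub hint₁)
  rw [intervalIntegral.integral_sub hint₀ hint₁, intervalIntegral.integral_const_mul,
    intervalIntegral.integral_const_mul] at hFTC
  simp only [Pi.mul_apply, one_rpow, zero_rpow hb.ne', mul_one, zero_mul, sub_zero] at hFTC
  rw [powExpIntegral, powExpIntegral]
  linarith

lemma mul_powExpIntegral_one (x : ℝ) : x * powExpIntegral 1 x = 1 - exp (-x) := by
  have hFTC := integral_eq_sub_of_hasDerivAt (a := 0) (b := 1)
    (fun s _ => (hasDerivAt_exp_neg_mul x s).fun_neg)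
    (Continuous.intervalIntegrable (by fun_prop) _ _)
  simp only [neg_neg, intervalIntegral.integral_const_mul, mul_one, mul_zero, neg_zero, exp_zero]
    at hFTC
  simp only [powExpIntegral, sub_self, rpow_zero, one_mul, hFTC]
  ring

lemma powExpIntegral_le_of_le {b c : ℝ} (hb : 0 < b) (hbc : b ≤ c) (x : ℝ) :
    powExpIntegral c x ≤ powExpIntegral b x :=
  integral_mono_on_of_le_Ioo zero_le_one
    (intervalIntegrable_rpow_sub_one_mul (by linarith) (by fun_prop))
    (intervalIntegrable_rpow_sub_one_mul hb (by fun_prop))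
    fun s hs => mul_le_mul_of_nonneg_right
      (rpow_le_rpow_of_exponent_ge hs.1 hs.2.le (by linarith)) (exp_pos _).le

lemma powExpIntegral_sub_eq {b c : ℝ} (hb : 0 < b) (hc : 0 < c) (x : ℝ) :
    powExpIntegral b x - powExpIntegral c x
      = ∫ s in (0:ℝ)..1, (s ^ (b - 1) - s ^ (c - 1)) * exp (-(x * s)) := by
  simp_rw [sub_mul]
  exact (intervalIntegral.integral_sub (intervalIntegrable_rpow_sub_one_mul hb (by fun_prop))
    (intervalIntegrable_rpow_sub_one_mul hc (by fun_prop))).symm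

lemma exp_le_mul_powExpIntegral {b : ℝ} (hb : 0 < b) (x : ℝ) :
    exp (-(b * x) / (b + 1)) ≤ b * powExpIntegral b x := by
  have hmass : ∫ s in (0:ℝ)..1, s ^ (b - 1) = 1 / b := by
    simpa using integral_rpow_sub_one_mul_pow hb 0
  have hmean : ∫ s in (0:ℝ)..1, s ^ (b - 1) * s
      = b / (b + 1) * ∫ s in (0:ℝ)..1, s ^ (b - 1) := by
    rw [hmass, div_mul_div_comm, mul_one, mul_comm, ← div_div, div_self hb.ne']
    simpa using integral_rpow_sub_one_mul_pow hb 1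
  have hjensen := mul_exp_le_integral_mul_exp (fun s hs => rpow_nonneg hs.1.le _)
    (intervalIntegrable_rpow' (by linarith)) hmean x
  rw [hmass] at hjensen
  calc exp (-(b * x) / (b + 1)) = b * (1 / b * exp (-(x * (b / (b + 1))))) := by field_simp
    _ ≤ b * powExpIntegral b x := mul_le_mul_of_nonneg_left hjensen hb.le

lemma exp_add_mul_exp_le_mul_powExpIntegral {b x : ℝ} (hb : 0 < b) (hx : 0 ≤ x) :
    exp (-x) + x / (b + 1) * exp (-((b + 1) * x) / (b + 2)) ≤ b * powExpIntegral b x := by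
  have hjensen := exp_le_mul_powExpIntegral (b := b + 1) (by linarith) x
  rw [show b + 1 + 1 = b + 2 by ring] at hjensen
  calc exp (-x) + x / (b + 1) * exp (-((b + 1) * x) / (b + 2))
      ≤ exp (-x) + x / (b + 1) * ((b + 1) * powExpIntegral (b + 1) x) := by gcongr
    _ = b * powExpIntegral b x := by
        rw [mul_powExpIntegral hb]
        field_simp

lemma mul_powExpIntegral_le_div {b x : ℝ} (hb : 0 < b) (hx : 0 ≤ x) (hxb : x < b + 1) :
    b * powExpIntegral b x ≤ (b + 1) * exp (-x) / (b + 1 - x) := by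
  have hrec := mul_powExpIntegral hb x
  have hrec' := mul_powExpIntegral (b := b + 1) (by linarith) x
  have hmono := powExpIntegral_le_of_le (b := b + 1) (c := b + 1 + 1) (by linarith)
    (by linarith) x
  -- the two recursions differ by `x (J_{b+1} - J_{b+2}) ≥ 0`
  have hshift : (b + 1) * powExpIntegral (b + 1) x ≤ b * powExpIntegral b x := by
    linarith [mul_le_mul_of_nonneg_left hmono hx]
  rw [le_div_iff₀ (by linarith)]
  nlinarith [mul_le_mul_of_nonneg_left hshift hx]

/-- The quadratic in `s` that agrees with `e^{-xs}` at `s = 0` and is tangent to it at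
`s = (b+1)/(b+2)` dominates it on `[0, 1]`; its integral is the mean of `e^{-xs}` under the law on
`{0, (b+1)/(b+2)}` with the first two moments of Beta(b, 1). -/
lemma mul_powExpIntegral_le_two_point {b x : ℝ} (hb : 0 < b) (hx : 0 < x) :
    b * powExpIntegral b x
      ≤ 1 / (b + 1) ^ 2 + b * (b + 2) / (b + 1) ^ 2 * exp (-((b + 1) * x) / (b + 2)) := by
  set d := (b + 1) * x / (b + 2) with hd
  set K := (exp d - 1 - d) / d ^ 2 with hK
  have hd₀ : 0 < d := by positivity
  have hdom (s : ℝ) (hs : s ∈ Ioo (0:ℝ) 1) : exp (-(x * s)) ≤ exp (-d) * (1 + d + d ^ 2 * K)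
      + exp (-d) * (-x - 2 * d * K * x) * s + exp (-d) * (K * x ^ 2) * s ^ 2 := by
    have h := exp_sub_one_sub_le hd₀ (by nlinarith [hs.1] : d - x * s ≤ d)
    rw [show exp (-(x * s)) = exp (-d) * exp (d - x * s) by rw [← exp_add]; ring_nf]
    nlinarith [exp_pos (-d)]
  have hmass : ∫ s in (0:ℝ)..1, s ^ (b - 1) = 1 / b := by
    simpa using integral_rpow_sub_one_mul_pow hb 0
  have hmean : ∫ s in (0:ℝ)..1, s ^ (b - 1) * s = 1 / (b + 1) := by
    simpa using integral_rpow_sub_one_mul_pow hb 1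
  have hsecond : ∫ s in (0:ℝ)..1, s ^ (b - 1) * s ^ 2 = 1 / (b + 2) := by
    simpa using integral_rpow_sub_one_mul_pow hb 2
  have hint := integral_mul_mono (fun s hs => rpow_nonneg hs.1.le (b - 1))
    (intervalIntegrable_rpow' (by linarith)) (by fun_prop) (by fun_prop) hdom
  rw [integral_mul_quadratic (intervalIntegrable_rpow' (by linarith)), hmass, hmean,
    hsecond] at hint
  calc b * powExpIntegral b x ≤ b * _ := mul_le_mul_of_nonneg_left hint hb.le
    _ = _ := by
      have hx' : x = d * (b + 2) / (b + 1) := by rw [hd]; field_simp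
      rw [show -((b + 1) * x) / (b + 2) = -d by rw [hd]; ring, hx', hK, exp_neg]
      field_simp
      ring

lemma mul_exp_le_powExpIntegral_sub {b c : ℝ} (hb : 0 < b) (hbc : b ≤ c) (x : ℝ) :
    (1 / b - 1 / c) * exp (-(x * (b * c / ((b + 1) * (c + 1)))))
      ≤ powExpIntegral b x - powExpIntegral c x := by
  have hc : 0 < c := by linarith
  have hmass := integral_rpow_sub_rpow_mul_pow hb hc 0
  have hmean := integral_rpow_sub_rpow_mul_pow hb hc 1
  simp only [pow_zero, mul_one, pow_one, Nat.cast_zero, Nat.cast_one, add_zero] at hmass hmean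
  rw [← hmass, powExpIntegral_sub_eq hb hc]
  refine mul_exp_le_integral_mul_exp (fun s hs => rpow_sub_rpow_nonneg hbc hs)
    (intervalIntegrable_rpow_sub_rpow hb hc) ?_ x
  rw [hmass, hmean]
  field_simp
  ring

lemma powExpIntegral_sub_le {b c : ℝ} (hb : 0 < b) (hbc : b ≤ c) (x : ℝ) :
    powExpIntegral b x - powExpIntegral c x
      ≤ (1 / b - 1 / c) + (exp (-x) - 1) * (1 / (b + 1) - 1 / (c + 1)) := by
  have hc : 0 < c := by linarith
  have hmass := integral_rpow_sub_rpow_mul_pow hb hc 0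
  have hmean := integral_rpow_sub_rpow_mul_pow hb hc 1
  simp only [pow_zero, mul_one, pow_one, Nat.cast_zero, Nat.cast_one, add_zero] at hmass hmean
  rw [← hmass, ← hmean, powExpIntegral_sub_eq hb hc]
  exact integral_mul_exp_le_chord (fun s hs => rpow_sub_rpow_nonneg hbc hs)
    (intervalIntegrable_rpow_sub_rpow hb hc) x

lemma sq_mul_powExpIntegral_two_sub {b : ℝ} (hb : 0 < b) (x : ℝ) :
    x ^ 2 * (powExpIntegral 2 x - powExpIntegral (b + 2) x)
      = b * exp (-x) + 1 - b * (b + 1) * powExpIntegral b x := by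
  have h₁ := mul_powExpIntegral one_pos x
  have hb₀ := mul_powExpIntegral hb x
  have hb₁ := mul_powExpIntegral (b := b + 1) (by linarith) x
  rw [one_add_one_eq_two] at h₁
  rw [add_assoc, one_add_one_eq_two] at hb₁
  linear_combination -x * h₁ + x * hb₁ + mul_powExpIntegral_one x + (b + 1) * hb₀

lemma chord_bound_le_mul_powExpIntegral {b : ℝ} (hb : 0 < b) (x : ℝ) :
    (b * exp (-x) + 1) / (b + 1)
        - b * x ^ 2 * (b + 5 + 2 * (b + 2) * exp (-x)) / (6 * (b + 1) * (b + 2) * (b + 3))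
      ≤ b * powExpIntegral b x := by
  have hchord := powExpIntegral_sub_le two_pos (by linarith : (2:ℝ) ≤ b + 2) x
  calc _ = (b * exp (-x) + 1 - x ^ 2 * ((1 / 2 - 1 / (b + 2))
          + (exp (-x) - 1) * (1 / (2 + 1) - 1 / (b + 2 + 1)))) / (b + 1) := by
        field_simp
        ring
    _ ≤ (b * exp (-x) + 1
          - x ^ 2 * (powExpIntegral 2 x - powExpIntegral (b + 2) x)) / (b + 1) := by
        gcongr
    _ = b * powExpIntegral b x := by
        rw [div_eq_iff (by linarith), sq_mul_powExpIntegral_two_sub hb]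
        ring

lemma mul_powExpIntegral_le_sub_mul_exp {b : ℝ} (hb : 0 < b) (x : ℝ) :
    b * powExpIntegral b x
      ≤ (b * exp (-x) + 1) / (b + 1)
        - b * x ^ 2 / (2 * (b + 1) * (b + 2)) * exp (-(2 * (b + 2) * x) / (3 * (b + 3))) := by
  have hjensen := mul_exp_le_powExpIntegral_sub two_pos (by linarith : (2:ℝ) ≤ b + 2) x
  calc b * powExpIntegral b x
      = (b * exp (-x) + 1
          - x ^ 2 * (powExpIntegral 2 x - powExpIntegral (b + 2) x)) / (b + 1) := by
        rw [eq_div_iff (by linarith), sq_mul_powExpIntegral_two_sub hb]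
        ring
    _ ≤ (b * exp (-x) + 1 - x ^ 2 * ((1 / 2 - 1 / (b + 2))
          * exp (-(x * (2 * (b + 2) / ((2 + 1) * (b + 2 + 1))))))) / (b + 1) := by
        gcongr
    _ = _ := by
        field_simp
        ring_nf

theorem gamma_lower_upper_bounds (a : ℝ) (ha : 0 < a) (x : ℝ) (hx : 0 < x) :
    (max (Real.exp (-(a * x) / (a + 1)))
        (max (Real.exp (-x) + x / (a + 1) * Real.exp (-((a + 1) * x) / (a + 2)))
          ((a * Real.exp (-x) + 1) / (a + 1)
            - a * x ^ 2 * (a + 5 + 2 * (a + 2) * Real.exp (-x))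
              / (6 * (a + 1) * (a + 2) * (a + 3))))
      ≤ a * Real.Gamma a / x ^ a * gammaCDF a x) ∧
    (a * Real.Gamma a / x ^ a * gammaCDF a x
      ≤ min (1 / (a + 1) ^ 2 + a * (a + 2) / (a + 1) ^ 2 * Real.exp (-((a + 1) * x) / (a + 2)))
          ((a * Real.exp (-x) + 1) / (a + 1)
            - a * x ^ 2 / (2 * (a + 1) * (a + 2))
              * Real.exp (-(2 * (a + 2) * x) / (3 * (a + 3))))) ∧
    (x < a + 1 →
      a * Real.Gamma a / x ^ a * gammaCDF a x ≤ (a + 1) * Real.exp (-x) / (a + 1 - x)) := by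
  rw [mul_Gamma_div_rpow_mul_gammaCDF ha hx]
  exact ⟨max_le (exp_le_mul_powExpIntegral ha x)
      (max_le (exp_add_mul_exp_le_mul_powExpIntegral ha hx.le)
        (chord_bound_le_mul_powExpIntegral ha x)),
    le_min (mul_powExpIntegral_le_two_point ha hx) (mul_powExpIntegral_le_sub_mul_exp ha x),
    mul_powExpIntegral_le_div ha hx.le⟩
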